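/- arXiv:1506.01483 — 3 statements merged into one kernel-verified Lean document; each statement's English description precedes it below -/
import Mathlib

section
/- Let Γ_a be a vertex-weighted graph and let p(Γ_a) be its polarization, the simple graph on vertices i_r (i ∈ V, 1 ≤ r ≤ a_i) where {i_r, j_s} is an edge iff {i,j} is an edge of Γ. Then ν(Γ_a) = ν(p(Γ_a)), i.e., the weighted matching number of Γ_a equals the (ordinary) matching number of its polarization. -/
open MvPolynomial

section Defs

variable {V : Type*}

/-- A matching of the vertex-weighted graph `Γ_a`: a multiset of (oriented) edges of `G`
in which every vertex `i` appears at most `a i` times. -/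
def IsWMatching [DecidableEq V] (G : SimpleGraph V) (a : V → ℕ)
    (M : Multiset (V × V)) : Prop :=
  (∀ e ∈ M, G.Adj e.1 e.2) ∧
    ∀ i : V, (M.map Prod.fst).count i + (M.map Prod.snd).count i ≤ a i

/-- The matching number `ν(Γ_a)` of the vertex-weighted graph `Γ_a`. -/
noncomputable def wNu [DecidableEq V] (G : SimpleGraph V) (a : V → ℕ) : ℕ :=
  sSup {k : ℕ | ∃ M : Multiset (V × V), IsWMatching G a M ∧ Multiset.card M = k}

/-- A perfect matching of `Γ_a`: every vertex `i` appears exactly `a i` times. -/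
def IsWPerfectMatching [DecidableEq V] (G : SimpleGraph V) (a : V → ℕ)
    (M : Multiset (V × V)) : Prop :=
  (∀ e ∈ M, G.Adj e.1 e.2) ∧
    ∀ i : V, (M.map Prod.fst).count i + (M.map Prod.snd).count i = a i

/-- `Γ_a` is matching-critical: lowering the weight of any supported vertex
does not decrease the matching number. -/
def MatchingCritical [DecidableEq V] (G : SimpleGraph V) (a : V → ℕ) : Prop :=
  ∀ i : V, a i ≠ 0 → wNu G (a - Pi.single i 1) = wNu G a

/-- The polarization `p(Γ_a)`: each vertex `i` is replaced by `a i` copies. -/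
def polarization (G : SimpleGraph V) (a : V → ℕ) :
    SimpleGraph (Σ i : V, Fin (a i)) where
  Adj u v := G.Adj u.1 v.1
  symm := ⟨fun _ _ h => G.adj_symm h⟩
  loopless := ⟨fun u h => G.irrefl h⟩

/-- The base graph of `Γ_a` as a spanning subgraph of `G`: edges of `G` between
supported vertices (vertices of weight `0` become isolated). -/
def baseGraph (G : SimpleGraph V) (a : V → ℕ) : SimpleGraph V where
  Adj i j := G.Adj i j ∧ a i ≠ 0 ∧ a j ≠ 0
  symm := ⟨fun _ _ h => ⟨h.1.symm, h.2.2, h.2.1⟩⟩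
  loopless := ⟨fun _ h => G.irrefl h.1⟩

/-- An ear: a walk with endpoints `u`, `v` and list of inner vertices `inner`. -/
structure PreEar (V : Type*) where
  u : V
  inner : List V
  v : V

namespace PreEar

/-- The length of an ear. -/
def len (E : PreEar V) : ℕ := E.inner.length + 1

/-- The vertex list of an ear. -/
def verts (E : PreEar V) : List V := E.u :: (E.inner ++ [E.v])

/-- The ear is a walk in `G`. -/
def IsWalk (G : SimpleGraph V) (E : PreEar V) : Prop := List.Chain' G.Adj E.verts

end PreEar

/-- Endpoints of each subsequent ear belong to earlier ears
(`S` accumulates the vertices seen so far). -/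
def earsOk (G : SimpleGraph V) : List (PreEar V) → List V → Prop
  | [], _ => True
  | E :: rest, S => E.u ∈ S ∧ E.v ∈ S ∧ earsOk G rest (S ++ E.verts)

/-- The number of appearances of `i` in an ear decomposition, not as an endpoint of
the subsequent ears. -/
def earCount [DecidableEq V] (i : V) : List (PreEar V) → ℕ
  | [] => 0
  | E0 :: rest => (E0.u :: E0.inner).count i + (rest.map fun E => E.inner.count i).sum

/-- The number of even ears of an ear decomposition. -/
def evenEars (D : List (PreEar V)) : ℕ :=
  D.countP fun E => E.inner.length % 2 == 1

/-- An ear decomposition starting with an odd closed walk. -/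
def IsInitOddDecomp (G : SimpleGraph V) (D : List (PreEar V)) : Prop :=
  ∃ E0 rest, D = E0 :: rest ∧ E0.u = E0.v ∧ Odd E0.len ∧
    (∀ E ∈ D, E.IsWalk G) ∧ earsOk G rest E0.verts

/-- A family of initially odd ear decompositions of the connected components of the
weighted graph `Γ_a`: each member is an initially odd ear decomposition, every vertex `i`
appears exactly `a i` times (not as an endpoint of subsequent ears), and different members
lie in different connected components of the base graph. -/
def IsInitOddFamily [DecidableEq V] (G : SimpleGraph V) (a : V → ℕ)
    (L : List (List (PreEar V))) : Prop :=
  (∀ D ∈ L, IsInitOddDecomp G D) ∧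
  (∀ i : V, a i = (L.map (earCount i)).sum) ∧
  L.Pairwise (fun D1 D2 =>
    ∀ x y : V, (∃ E ∈ D1, x ∈ E.verts) → (∃ E ∈ D2, y ∈ E.verts) →
      ¬ (baseGraph G a).Reachable x y)

/-- `φ*(Γ_a)`: the minimal total number of even ears in families of initially odd
ear decompositions of the connected components. -/
noncomputable def phiStar [DecidableEq V] (G : SimpleGraph V) (a : V → ℕ) : ℕ :=
  sInf {k : ℕ | ∃ L, IsInitOddFamily G a L ∧ (L.map evenEars).sum = k}

/-- `μ*(Γ) = (φ*(Γ) + n - c) / 2`, where `n` is the number of vertices and `c` the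
number of connected components. -/
noncomputable def muStar [DecidableEq V] (G : SimpleGraph V) : ℕ :=
  (phiStar G (fun _ => 1) + Nat.card V - Nat.card G.ConnectedComponent) / 2

/-- Every connected component of `G` contains an odd cycle (equivalently, an odd
closed walk), i.e. every connected component is non-bipartite. -/
def StronglyNonBip (G : SimpleGraph V) : Prop :=
  ∀ v : V, ∃ u, G.Reachable v u ∧ ∃ p : G.Walk u u, Odd p.length

/-- `G` is non-bipartite: it contains an odd closed walk. -/
def NonBip (G : SimpleGraph V) : Prop :=
  ∃ (u : V) (p : G.Walk u u), Odd p.length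

/-- A vertex cover of `G`. -/
def IsCover (G : SimpleGraph V) (F : Set V) : Prop :=
  ∀ ⦃i j : V⦄, G.Adj i j → i ∈ F ∨ j ∈ F

/-- The closed neighborhood `N[U]`. -/
def closedNbhd (G : SimpleGraph V) (U : Set V) : Set V :=
  {v | v ∈ U ∨ ∃ u ∈ U, G.Adj v u}

/-- The core `c(F) = F \ N[V \ F]` of a cover `F`. -/
def core (G : SimpleGraph V) (F : Set V) : Set V :=
  {i ∈ F | ∀ j, G.Adj i j → j ∈ F}

/-- `U` is a dominating set of `G`: `N[U] = V`. -/
def IsDominating (G : SimpleGraph V) (U : Set V) : Prop :=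
  ∀ v : V, v ∈ U ∨ ∃ u ∈ U, G.Adj v u

/-- The edge ideal of a graph `G` in the polynomial ring over `k`. -/
noncomputable def edgeIdeal (k : Type*) [Field k] (G : SimpleGraph V) :
    Ideal (MvPolynomial V k) :=
  Ideal.span {p | ∃ i j : V, G.Adj i j ∧ p = X i * X j}

/-- The maximal homogeneous ideal `(x_1, ..., x_n)`. -/
noncomputable def maxIdeal (k : Type*) [Field k] (V : Type*) :
    Ideal (MvPolynomial V k) :=
  Ideal.span (Set.range (X : V → MvPolynomial V k))

/-- The monomial `x^a = x_1^{a_1} ⋯ x_n^{a_n}`. -/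
noncomputable def monA (k : Type*) [Field k] [Fintype V] (a : V → ℕ) :
    MvPolynomial V k :=
  ∏ i : V, X i ^ a i

/-- A connected minimal `s`-base: a connected non-bipartite graph with `μ* = s`
containing no proper spanning subgraph which is connected non-bipartite with `μ* = s`. -/
def ConnMinBase [DecidableEq V] (G : SimpleGraph V) (s : ℕ) : Prop :=
  G.Connected ∧ NonBip G ∧ muStar G = s ∧
    ∀ H : SimpleGraph V, H ≤ G → H ≠ G →
      ¬ (H.Connected ∧ NonBip H ∧ muStar H = s)

open Classical in
/-- The restriction of the weight `a` to the connected component of `i`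
in the base graph of `Γ_a`. -/
noncomputable def compWeight [DecidableEq V] (G : SimpleGraph V) (a : V → ℕ) (i : V) :
    V → ℕ :=
  fun j => if (baseGraph G a).Reachable i j then a j else 0

end Defs

/-! A matching of `p(Γ_a)` projects to a matching of `Γ_a` of the same size, since the copies of `i`
are used at most once each and there are `a i` of them. Conversely a matching of `Γ_a` lifts edge by
edge: when an edge at `i` is added, fewer than `a i` of the earlier edges meet `i`, so by pigeonhole
some copy of `i` is still free. -/

section Polarization

variable {V : Type*} [DecidableEq V]

theorem Multiset.count_map_sigma_fst {β : V → Type*} [∀ i, Fintype (β i)]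
    [∀ i, DecidableEq (β i)] (S : Multiset (Σ i, β i)) (i : V) :
    (S.map Sigma.fst).count i = ∑ b : β i, S.count ⟨i, b⟩ := by
  induction S using Multiset.induction_on with
  | empty => simp
  | cons x S ih =>
    obtain ⟨j, c⟩ := x
    by_cases hij : i = j
    · subst hij
      simp [Multiset.count_cons, ih, Finset.sum_add_distrib]
    · simp [ih, hij]

theorem Multiset.exists_count_sigma_eq_zero {β : V → Type*} [∀ i, Fintype (β i)]
    [∀ i, DecidableEq (β i)] {S : Multiset (Σ i, β i)} {i : V}
    (h : (S.map Sigma.fst).count i < Fintype.card (β i)) : ∃ b, S.count ⟨i, b⟩ = 0 := by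
  by_contra! hpos
  have : Fintype.card (β i) ≤ (S.map Sigma.fst).count i := by
    rw [Multiset.count_map_sigma_fst, Fintype.card_eq_sum_ones]
    exact Finset.sum_le_sum fun b _ => Nat.one_le_iff_ne_zero.mpr (hpos b)
  omega

def edgeEnds {W : Type*} (M : Multiset (W × W)) : Multiset W :=
  M.map Prod.fst + M.map Prod.snd

theorem isWMatching_iff (G : SimpleGraph V) (a : V → ℕ) (M : Multiset (V × V)) :
    IsWMatching G a M ↔ (∀ e ∈ M, G.Adj e.1 e.2) ∧ ∀ i, (edgeEnds M).count i ≤ a i := by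
  simp only [IsWMatching, edgeEnds, Multiset.count_add]

theorem edgeEnds_cons {W : Type*} (e : W × W) (M : Multiset (W × W)) :
    edgeEnds (e ::ₘ M) = e.1 ::ₘ e.2 ::ₘ edgeEnds M := by
  simp only [edgeEnds, Multiset.map_cons, Multiset.cons_add, Multiset.add_cons]
  exact Multiset.cons_swap _ _ _

theorem edgeEnds_map_prodMap {W W' : Type*} (f : W → W') (M : Multiset (W × W)) :
    edgeEnds (M.map (Prod.map f f)) = (edgeEnds M).map f := by
  simp only [edgeEnds, Multiset.map_map, Multiset.map_add]
  rfl

variable {G : SimpleGraph V} {a : V → ℕ}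

abbrev polarizationProj (a : V → ℕ) :
    (Σ i, Fin (a i)) × (Σ i, Fin (a i)) → V × V :=
  Prod.map Sigma.fst Sigma.fst

theorem IsWMatching.map_polarizationProj
    {N : Multiset ((Σ i, Fin (a i)) × (Σ i, Fin (a i)))}
    (hN : IsWMatching (polarization G a) (fun _ => 1) N) :
    IsWMatching G a (N.map (polarizationProj a)) := by
  rw [isWMatching_iff] at hN ⊢
  refine ⟨fun e he => ?_, fun i => ?_⟩
  · obtain ⟨f, hf, rfl⟩ := Multiset.mem_map.mp he
    exact hN.1 f hf
  · calc (edgeEnds (N.map (polarizationProj a))).count i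
        = ∑ r : Fin (a i), (edgeEnds N).count ⟨i, r⟩ := by
          rw [edgeEnds_map_prodMap, Multiset.count_map_sigma_fst]
      _ ≤ ∑ _r : Fin (a i), 1 := Finset.sum_le_sum fun r _ => hN.2 _
      _ = a i := by simp

theorem IsWMatching.exists_cons_polarization
    {N : Multiset ((Σ i, Fin (a i)) × (Σ i, Fin (a i)))}
    (hN : IsWMatching (polarization G a) (fun _ => 1) N) {x y : V} (hxy : G.Adj x y)
    (hx : (edgeEnds (N.map (polarizationProj a))).count x < a x)
    (hy : (edgeEnds (N.map (polarizationProj a))).count y < a y) :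
    ∃ r s, IsWMatching (polarization G a) (fun _ => 1) ((⟨x, r⟩, ⟨y, s⟩) ::ₘ N) := by
  rw [edgeEnds_map_prodMap] at hx hy
  obtain ⟨r, hr⟩ := Multiset.exists_count_sigma_eq_zero (hx.trans_eq (Fintype.card_fin _).symm)
  obtain ⟨s, hs⟩ := Multiset.exists_count_sigma_eq_zero (hy.trans_eq (Fintype.card_fin _).symm)
  have hrs : (⟨x, r⟩ : Σ i, Fin (a i)) ≠ ⟨y, s⟩ := fun h => hxy.ne (congrArg Sigma.fst h)
  refine ⟨r, s, ?_⟩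
  rw [isWMatching_iff] at hN ⊢
  refine ⟨Multiset.forall_mem_cons.mpr ⟨hxy, hN.1⟩, fun u => ?_⟩
  have := hN.2 u
  rw [edgeEnds_cons, Multiset.count_cons, Multiset.count_cons]
  by_cases hur : u = ⟨x, r⟩
  · subst hur; simp [hr, hrs]
  · by_cases hus : u = ⟨y, s⟩
    · subst hus; simp [hs, Ne.symm hrs]
    · simp [hur, hus, this]

theorem IsWMatching.exists_polarization_lift {M : Multiset (V × V)} (hM : IsWMatching G a M) :
    ∃ N, N.map (polarizationProj a) = M ∧ IsWMatching (polarization G a) (fun _ => 1) N := by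
  induction M using Multiset.induction_on with
  | empty => exact ⟨0, rfl, by simp [IsWMatching]⟩
  | cons e M ih =>
    rw [isWMatching_iff] at hM
    obtain ⟨hadj, hcount⟩ := hM
    have hne := (hadj e (Multiset.mem_cons_self e M)).ne
    have hcount' (i : V) : (edgeEnds M).count i + (if i = e.1 then 1 else 0) +
        (if i = e.2 then 1 else 0) ≤ a i := by
      have := hcount i
      rw [edgeEnds_cons, Multiset.count_cons, Multiset.count_cons] at this
      omega
    obtain ⟨N, hNM, hN⟩ := ih <| (isWMatching_iff G a M).mpr
      ⟨fun f hf => hadj f (Multiset.mem_cons_of_mem hf), fun i => by have := hcount' i; omega⟩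
    have hx := hcount' e.1
    have hy := hcount' e.2
    simp only [if_pos, if_neg hne, if_neg hne.symm] at hx hy
    obtain ⟨r, s, hrs⟩ := hN.exists_cons_polarization (hadj e (Multiset.mem_cons_self e M))
      (by rw [hNM]; omega) (by rw [hNM]; omega)
    exact ⟨_, by simp [hNM], hrs⟩

end Polarization

/-- `ν(Γ_a) = ν(p(Γ_a))`. -/
theorem stmt_1 {V : Type*} [DecidableEq V] (G : SimpleGraph V) (a : V → ℕ) :
    wNu G a = wNu (polarization G a) (fun _ => 1) := by
  unfold wNu
  congr 1
  ext k
  constructor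
  · rintro ⟨M, hM, rfl⟩
    obtain ⟨N, rfl, hN⟩ := hM.exists_polarization_lift
    exact ⟨N, hN, (Multiset.card_map _ _).symm⟩
  · rintro ⟨N, hN, rfl⟩
    exact ⟨_, hN.map_polarizationProj, Multiset.card_map _ _⟩
end

section
/- Suppose a ∈ ℕ^n is such that V(a) is a dominating set of Γ, the weighted graph Γ_a has no isolated vertices, and ν(Γ_{a−e_i}) = ν(Γ_a) = t − 1 for all i ∈ V(a). Then x^a ∈ (I^t : m) \ I^t; in particular, m is an associated prime of I^t. -/
open MvPolynomial

/-!
A monomial `x^b` lies in `I^t` exactly when `Γ_b` has a matching with `t` edges, so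
`x^a ∉ I^t` because `ν(Γ_a) = t - 1`. Given a vertex `i`, domination and the absence of
isolated vertices provide a supported neighbour `j`; a maximum matching of `Γ_{a-e_j}` has
`t - 1` edges by criticality, and adding the edge `ij` gives a matching of `Γ_{a+e_i}` with
`t` edges, so `x_i x^a ∈ I^t`. Thus the maximal ideal `m` is the annihilator of the nonzero
class of `x^a` in `R/I^t`.
-/

open Finsupp

section Matchings

variable {V : Type*}

noncomputable def matchingExponent (M : Multiset (V × V)) : V →₀ ℕ :=
  (M.map fun e => single e.1 1 + single e.2 1).sum

@[simp]
lemma matchingExponent_zero : matchingExponent (0 : Multiset (V × V)) = 0 := rfl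

@[simp]
lemma matchingExponent_cons (e : V × V) (M : Multiset (V × V)) :
    matchingExponent (e ::ₘ M) = single e.1 1 + single e.2 1 + matchingExponent M := by
  simp [matchingExponent]

lemma matchingExponent_apply [DecidableEq V] (M : Multiset (V × V)) (i : V) :
    matchingExponent M i = (M.map Prod.fst).count i + (M.map Prod.snd).count i := by
  induction M using Multiset.induction_on with
  | empty => simp
  | cons e M ih =>
    simp only [matchingExponent_cons, Finsupp.coe_add, Pi.add_apply, ih, single_apply,
      Multiset.map_cons, Multiset.count_cons]
    grind

variable [DecidableEq V]

lemma isWMatching_iff_matchingExponent_le [Finite V] (G : SimpleGraph V) (b : V → ℕ)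
    (M : Multiset (V × V)) :
    IsWMatching G b M ↔
      (∀ e ∈ M, G.Adj e.1 e.2) ∧ matchingExponent M ≤ equivFunOnFinite.symm b := by
  simp only [IsWMatching, le_def, matchingExponent_apply, coe_equivFunOnFinite_symm]

lemma IsWMatching.cons {G : SimpleGraph V} {b : V → ℕ} {M : Multiset (V × V)} {i j : V}
    (hM : IsWMatching G (b - Pi.single j 1) M) (hj : b j ≠ 0) (hij : G.Adj i j) :
    IsWMatching G (b + Pi.single i 1) ((i, j) ::ₘ M) := by
  refine ⟨fun e he => ?_, fun v => ?_⟩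
  · rcases Multiset.mem_cons.mp he with rfl | he
    exacts [hij, hM.1 e he]
  · have hv := hM.2 v
    simp only [Multiset.map_cons, Multiset.count_cons, Pi.add_apply, Pi.sub_apply,
      Pi.single_apply] at hv ⊢
    split_ifs at hv ⊢ <;> subst_vars <;> omega

variable [Fintype V]

lemma card_le_sum_of_isWMatching {G : SimpleGraph V} {b : V → ℕ} {M : Multiset (V × V)}
    (hM : IsWMatching G b M) : Multiset.card M ≤ ∑ i, b i := by
  calc Multiset.card M = ∑ i, (M.map Prod.fst).count i := by
        rw [Multiset.sum_count_eq_card (fun _ _ => Finset.mem_univ _), Multiset.card_map]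
    _ ≤ ∑ i, b i := Finset.sum_le_sum fun i _ => (Nat.le_add_right _ _).trans (hM.2 i)

lemma bddAbove_card_isWMatching (G : SimpleGraph V) (b : V → ℕ) :
    BddAbove {m | ∃ M : Multiset (V × V), IsWMatching G b M ∧ Multiset.card M = m} :=
  ⟨∑ i, b i, by rintro _ ⟨M, hM, rfl⟩; exact card_le_sum_of_isWMatching hM⟩

lemma IsWMatching.card_le_wNu {G : SimpleGraph V} {b : V → ℕ} {M : Multiset (V × V)}
    (hM : IsWMatching G b M) : Multiset.card M ≤ wNu G b :=
  le_csSup (bddAbove_card_isWMatching G b) ⟨M, hM, rfl⟩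

lemma exists_isWMatching_card_eq_wNu (G : SimpleGraph V) (b : V → ℕ) :
    ∃ M : Multiset (V × V), IsWMatching G b M ∧ Multiset.card M = wNu G b := by
  refine Nat.sSup_mem ?_ (bddAbove_card_isWMatching G b)
  exact ⟨0, 0, ⟨by simp, by simp⟩, rfl⟩

end Matchings

section EdgeIdeal

variable {V k : Type*} [Field k]

lemma prod_X_mul_X_eq_monomial (M : Multiset (V × V)) :
    (M.map fun e => (X e.1 * X e.2 : MvPolynomial V k)).prod =
      monomial (matchingExponent M) 1 := by
  induction M using Multiset.induction_on with
  | empty => simp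
  | cons e M ih =>
    rw [Multiset.map_cons, Multiset.prod_cons, ih, matchingExponent_cons, add_assoc,
      monomial_single_add, monomial_single_add, pow_one, pow_one, mul_assoc]

lemma prod_X_mul_X_mem_edgeIdeal_pow (G : SimpleGraph V) {M : Multiset (V × V)}
    (hM : ∀ e ∈ M, G.Adj e.1 e.2) :
    (M.map fun e => (X e.1 * X e.2 : MvPolynomial V k)).prod ∈
      edgeIdeal k G ^ Multiset.card M := by
  induction M using Multiset.induction_on with
  | empty => simp
  | cons e M ih =>
    rw [Multiset.map_cons, Multiset.prod_cons, Multiset.card_cons, pow_succ']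
    exact Ideal.mul_mem_mul (Ideal.subset_span ⟨e.1, e.2, hM e (by simp), rfl⟩)
      (ih fun e' he' => hM e' (Multiset.mem_cons_of_mem he'))

lemma edgeIdeal_pow_le_span_monomial (G : SimpleGraph V) (t : ℕ) :
    edgeIdeal k G ^ t ≤ Ideal.span ((monomial · (1 : k)) ''
      {d | ∃ M : Multiset (V × V), (∀ e ∈ M, G.Adj e.1 e.2) ∧ Multiset.card M = t ∧
        matchingExponent M = d}) := by
  induction t with
  | zero =>
    rw [pow_zero, Ideal.one_eq_top, top_le_iff, Ideal.eq_top_iff_one]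
    exact Ideal.subset_span ⟨0, ⟨0, by simp, rfl, rfl⟩, rfl⟩
  | succ t ih =>
    rw [pow_succ, edgeIdeal]
    refine (Ideal.mul_mono ih le_rfl).trans ?_
    rw [Ideal.span_mul_span']
    refine Ideal.span_mono (Set.mul_subset_iff.mpr ?_)
    rintro _ ⟨_, ⟨M, hM, rfl, rfl⟩, rfl⟩ _ ⟨i, j, hij, rfl⟩
    refine ⟨matchingExponent ((i, j) ::ₘ M), ⟨(i, j) ::ₘ M, ?_, by simp, rfl⟩, ?_⟩
    · simpa [hij] using hM
    · dsimp only
      rw [← prod_X_mul_X_eq_monomial, ← prod_X_mul_X_eq_monomial, Multiset.map_cons,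
        Multiset.prod_cons, mul_comm]

lemma monomial_mem_edgeIdeal_pow_iff (G : SimpleGraph V) (t : ℕ) (d : V →₀ ℕ) :
    monomial d (1 : k) ∈ edgeIdeal k G ^ t ↔
      ∃ M : Multiset (V × V), (∀ e ∈ M, G.Adj e.1 e.2) ∧ Multiset.card M = t ∧
        matchingExponent M ≤ d := by
  classical
  constructor
  · intro h
    obtain ⟨_, ⟨M, hM, hcard, rfl⟩, hle⟩ :=
      mem_ideal_span_monomial_image.mp (edgeIdeal_pow_le_span_monomial G t h) d
        (by simp [support_monomial])
    exact ⟨M, hM, hcard, hle⟩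
  · rintro ⟨M, hM, rfl, hle⟩
    rw [← add_tsub_cancel_of_le hle, ← mul_one (1 : k), ← monomial_mul,
      ← prod_X_mul_X_eq_monomial]
    exact Ideal.mul_mem_right _ _ (prod_X_mul_X_mem_edgeIdeal_pow G hM)

variable [Fintype V]

lemma monA_eq_monomial (a : V → ℕ) : monA k a = monomial (equivFunOnFinite.symm a) 1 := by
  rw [monA, monomial_eq, C_1, one_mul, Finsupp.prod_fintype _ _ (by simp)]
  simp

lemma monA_add_single [DecidableEq V] (a : V → ℕ) (i : V) :
    monA k (a + Pi.single i 1) = X i * monA k a := by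
  simp only [monA, Pi.add_apply, pow_add, Finset.prod_mul_distrib, Pi.single_apply, pow_ite,
    pow_one, pow_zero, Finset.prod_ite_eq', Finset.mem_univ, if_true, mul_comm]

variable [DecidableEq V]

lemma monA_mem_edgeIdeal_pow_iff (G : SimpleGraph V) (b : V → ℕ) (t : ℕ) :
    monA k b ∈ edgeIdeal k G ^ t ↔
      ∃ M : Multiset (V × V), IsWMatching G b M ∧ Multiset.card M = t := by
  simp only [monA_eq_monomial, monomial_mem_edgeIdeal_pow_iff,
    isWMatching_iff_matchingExponent_le]
  grind

lemma X_mul_monA_mem_edgeIdeal_pow {G : SimpleGraph V} {b : V → ℕ} {i j : V}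
    (hj : b j ≠ 0) (hij : G.Adj i j) :
    X i * monA k b ∈ edgeIdeal k G ^ (wNu G (b - Pi.single j 1) + 1) := by
  obtain ⟨M, hM, hcard⟩ := exists_isWMatching_card_eq_wNu G (b - Pi.single j 1)
  rw [← monA_add_single, monA_mem_edgeIdeal_pow_iff]
  exact ⟨_, hM.cons hj hij, by rw [Multiset.card_cons, hcard]⟩

lemma monA_notMem_edgeIdeal_pow_of_wNu_lt {G : SimpleGraph V} {b : V → ℕ} {t : ℕ}
    (h : wNu G b < t) : monA k b ∉ edgeIdeal k G ^ t := by
  intro hmem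
  obtain ⟨M, hM, rfl⟩ := (monA_mem_edgeIdeal_pow_iff G b _).mp hmem
  exact h.not_ge hM.card_le_wNu

end EdgeIdeal

section MaxIdeal

variable {V k : Type*} [Field k]

lemma maxIdeal_eq_ker_constantCoeff :
    maxIdeal k V = RingHom.ker (constantCoeff : MvPolynomial V k →+* k) := by
  ext p
  rw [← pow_one (maxIdeal k V), show maxIdeal k V = idealOfVars V k from rfl,
    mem_pow_idealOfVars_iff', RingHom.mem_ker, constantCoeff_eq]
  simp [Finsupp.degree_eq_zero_iff]

lemma maxIdeal_isMaximal : (maxIdeal k V).IsMaximal := by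
  rw [maxIdeal_eq_ker_constantCoeff]
  exact RingHom.ker_isMaximal_of_surjective _ fun r => ⟨C r, constantCoeff_C _ r⟩

lemma mem_colon_maxIdeal_iff {I : Ideal (MvPolynomial V k)} {p : MvPolynomial V k} :
    p ∈ Submodule.colon I (maxIdeal k V) ↔ ∀ i, X i * p ∈ I := by
  simp [maxIdeal, Submodule.mem_colon, mul_comm]

end MaxIdeal

lemma mem_associatedPrimes_of_mem_colon_of_notMem {R : Type*} [CommRing R] {I m : Ideal R}
    (hm : m.IsMaximal) {x : R} (hx : x ∈ I.colon m) (hxI : x ∉ I) :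
    m ∈ associatedPrimes R (R ⧸ I) := by
  have hcolon : (⊥ : Submodule R (R ⧸ I)).colon {Ideal.Quotient.mk I x} = I.colon {x} := by
    ext r
    simp [Submodule.mem_colon_singleton, Algebra.smul_def, ← map_mul,
      Ideal.Quotient.eq_zero_iff_mem]
  have hle : m ≤ I.colon {x} := fun r hr => by
    rw [Submodule.mem_colon_singleton, smul_eq_mul, mul_comm]
    exact Submodule.mem_colon.mp hx r hr
  have hne : I.colon {x} ≠ ⊤ := fun h => hxI <| by
    simpa using Submodule.mem_colon_singleton.mp (h ▸ Submodule.mem_top : (1 : R) ∈ I.colon {x})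
  refine ⟨hm.isPrime, Ideal.Quotient.mk I x, ?_⟩
  rw [hcolon]
  exact hm.eq_of_le (mt Ideal.radical_eq_top.mp hne) (hle.trans Ideal.le_radical)

/-- if the support of `a` is dominating, `Γ_a` has no isolated vertices
and `ν(Γ_{a-e_i}) = ν(Γ_a) = t - 1` for all supported `i`, then
`x^a ∈ (I^t : m) \ I^t`; in particular `m ∈ Ass(R/I^t)`. -/
theorem stmt_4 {k : Type*} [Field k] {n : ℕ} (G : SimpleGraph (Fin n))
    (a : Fin n → ℕ) (t : ℕ) (ht : 1 ≤ t)
    (hdom : IsDominating G {i | a i ≠ 0})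
    (hiso : ∀ i, a i ≠ 0 → ∃ j, a j ≠ 0 ∧ G.Adj i j)
    (hnu : wNu G a = t - 1)
    (hcrit : ∀ i, a i ≠ 0 → wNu G (a - Pi.single i 1) = t - 1) :
    (monA k a ∈ Submodule.colon ((edgeIdeal k G) ^ t) (maxIdeal k (Fin n)) ∧
      monA k a ∉ (edgeIdeal k G) ^ t) ∧
    maxIdeal k (Fin n) ∈ associatedPrimes (MvPolynomial (Fin n) k)
      (MvPolynomial (Fin n) k ⧸ (edgeIdeal k G) ^ t) := by
  have hnotMem : monA k a ∉ edgeIdeal k G ^ t := monA_notMem_edgeIdeal_pow_of_wNu_lt (by omega)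
  have hcolon : monA k a ∈ Submodule.colon (edgeIdeal k G ^ t) (maxIdeal k (Fin n)) := by
    refine mem_colon_maxIdeal_iff.mpr fun i => ?_
    obtain ⟨j, hj, hij⟩ : ∃ j, a j ≠ 0 ∧ G.Adj i j := by
      by_cases hi : a i = 0
      · simpa [hi] using hdom i
      · exact hiso i hi
    simpa only [hcrit j hj, Nat.sub_add_cancel ht] using
      X_mul_monA_mem_edgeIdeal_pow (k := k) hj hij
  exact ⟨⟨hcolon, hnotMem⟩,
    mem_associatedPrimes_of_mem_colon_of_notMem maxIdeal_isMaximal hcolon hnotMem⟩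
end

section
/- Let F be a non-minimal vertex cover of Γ and let c(F) = F \ N[V \ F] be its core. A subset U ⊆ V is a dominating set of the induced subgraph Γ_{c(F)} if and only if F is minimal among the vertex covers of Γ containing N[U] (that is, N[U] ⊆ F and for every i ∈ F \ N[U], F \ {i} is not a vertex cover of Γ). -/
open MvPolynomial

theorem closedNbhd_subset_iff_subset_core {V : Type*} (G : SimpleGraph V) (F U : Set V) :
    closedNbhd G U ⊆ F ↔ U ⊆ core G F := by
  constructor
  · exact fun hN u hu => ⟨hN (Or.inl hu), fun j hj => hN (Or.inr ⟨u, hu, hj.symm⟩)⟩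
  · rintro hU v (hv | ⟨u, hu, huv⟩)
    exacts [(hU hv).1, (hU hu).2 v huv.symm]

theorem IsCover.isCover_diff_singleton_iff_mem_core {V : Type*} {G : SimpleGraph V}
    {F : Set V} (hF : IsCover G F) {i : V} (hi : i ∈ F) :
    IsCover G (F \ {i}) ↔ i ∈ core G F := by
  constructor
  · intro hcov
    refine ⟨hi, fun j hij => ?_⟩
    rcases hcov hij with h | h
    exacts [absurd rfl h.2, h.1]
  · intro hic j k hjk
    rcases hF hjk with hj | hk
    · by_cases hji : j = i
      · subst hji
        exact Or.inr ⟨hic.2 k hjk, hjk.ne.symm⟩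
      · exact Or.inl ⟨hj, hji⟩
    · by_cases hki : k = i
      · subst hki
        exact Or.inl ⟨hic.2 j hjk.symm, hjk.ne⟩
      · exact Or.inr ⟨hk, hki⟩

theorem stmt_14_general {V : Type*} (G : SimpleGraph V) (F : Set V) (hF : IsCover G F)
    (U : Set V) :
    (U ⊆ core G F ∧ ∀ x ∈ core G F, x ∈ U ∨ ∃ u ∈ U, G.Adj x u) ↔
      (closedNbhd G U ⊆ F ∧
        ∀ i ∈ F, i ∉ closedNbhd G U → ¬ IsCover G (F \ {i})) := by
  rw [closedNbhd_subset_iff_subset_core]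
  refine and_congr_right fun _ => ⟨fun hdom i hi hiN hcov => ?_, fun hmin x hx => ?_⟩
  · exact hiN (hdom i ((hF.isCover_diff_singleton_iff_mem_core hi).1 hcov))
  · by_contra hxN
    exact hmin x hx.1 hxN ((hF.isCover_diff_singleton_iff_mem_core hx.1).2 hx)

/-- for a non-minimal cover `F` with core `c(F)`, a set `U` dominates
`Γ_{c(F)}` iff `F` is minimal among the covers containing `N[U]`. -/
theorem stmt_14 {V : Type*} (G : SimpleGraph V) (F : Set V) (hF : IsCover G F)
    (hnm : ∃ i ∈ F, IsCover G (F \ {i})) (U : Set V) :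
    (U ⊆ core G F ∧ ∀ x ∈ core G F, x ∈ U ∨ ∃ u ∈ U, G.Adj x u) ↔
      (closedNbhd G U ⊆ F ∧
        ∀ i ∈ F, i ∉ closedNbhd G U → ¬ IsCover G (F \ {i})) :=
  stmt_14_general G F hF U
end
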